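/- Soundness of the VCGen for Hoare triples: if Tf(φ, ψ) holds, and for all σ, P σ implies Ta(c, σ, φ), and for all σ, P σ implies Tc(c, σ, φ, Q), then ⊨_ψ {P} c {Q}. -/

import Mathlib

/-- Memory states map addresses to natural-number values. -/
abbrev State := ℕ → ℕ

/-- Pointwise update σ[i/n]. -/
def upd (σ : State) (i n : ℕ) : State := fun j => if j = i then n else σ j

/-- Arithmetic expressions. -/
inductive Aexp : Type
  | const (n : ℕ)
  | loc (i : ℕ)
  | deref (i : ℕ)
  | addr (i : ℕ)
  | add (a b : Aexp)
  | mul (a b : Aexp)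
  | sub (a b : Aexp)

/-- Evaluation of arithmetic expressions (truncated subtraction on ℕ). -/
def evalA : Aexp → State → ℕ
  | .const n, _ => n
  | .loc i, σ => σ i
  | .deref i, σ => σ (σ i)
  | .addr i, _ => i
  | .add a b, σ => evalA a σ + evalA b σ
  | .mul a b, σ => evalA a σ * evalA b σ
  | .sub a b, σ => evalA a σ - evalA b σ

/-- Boolean expressions. -/
inductive Bexp : Type
  | tt
  | ff
  | le (a b : Aexp)
  | eq (a b : Aexp)
  | and (x y : Bexp)
  | or (x y : Bexp)
  | not (x : Bexp)

/-- Evaluation of Boolean expressions. -/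
def evalB : Bexp → State → Bool
  | .tt, _ => true
  | .ff, _ => false
  | .le a b, σ => decide (evalA a σ ≤ evalA b σ)
  | .eq a b, σ => decide (evalA a σ = evalA b σ)
  | .and x y, σ => evalB x σ && evalB y σ
  | .or x y, σ => evalB x σ || evalB y σ
  | .not x, σ => ! evalB x σ

/-- Assertions are predicates on memory states. -/
abbrev Assertion := State → Prop

/-- Procedure names. -/
abbrev ProcName := ℕ

/-- Commands of the While language with procedures, assertions and aliasing. -/
inductive Com : Type
  | skip
  | assign (i : ℕ) (a : Aexp)
  | assignDeref (i : ℕ) (a : Aexp)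
  | seq (c₁ c₂ : Com)
  | assert (P : Assertion)
  | ite (b : Bexp) (c₁ c₂ : Com)
  | while (b : Bexp) (inv : Assertion) (c : Com)
  | call (y : ProcName)

/-- Procedure environments map procedure names to bodies. -/
abbrev ProcEnv := ProcName → Com

/-- A procedure contract: precondition and postcondition. -/
structure Contract where
  pre : Assertion
  post : Assertion

/-- Contract environments. -/
abbrev ContractEnv := ProcName → Contract

/-- Big-step operational semantics ⟨c, σ⟩ ⇓_ψ σ'. -/
inductive BigStep (ψ : ProcEnv) : Com → State → State → Prop
  | skip {σ} : BigStep ψ .skip σ σ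
  | assign {i a σ} : BigStep ψ (.assign i a) σ (upd σ i (evalA a σ))
  | assignDeref {i a σ} : BigStep ψ (.assignDeref i a) σ (upd σ (σ i) (evalA a σ))
  | seq {c₁ c₂ σ σ' σ''} : BigStep ψ c₁ σ σ' → BigStep ψ c₂ σ' σ'' →
      BigStep ψ (.seq c₁ c₂) σ σ''
  | assert {P σ} : BigStep ψ (.assert P) σ σ
  | iteTrue {b c₁ c₂ σ σ'} : evalB b σ = true → BigStep ψ c₁ σ σ' →
      BigStep ψ (.ite b c₁ c₂) σ σ'
  | iteFalse {b c₁ c₂ σ σ'} : evalB b σ = false → BigStep ψ c₂ σ σ' →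
      BigStep ψ (.ite b c₁ c₂) σ σ'
  | whileTrue {b inv c σ σ' σ''} : evalB b σ = true → BigStep ψ c σ σ' →
      BigStep ψ (.while b inv c) σ' σ'' → BigStep ψ (.while b inv c) σ σ''
  | whileFalse {b inv c σ} : evalB b σ = false → BigStep ψ (.while b inv c) σ σ
  | call {y σ σ'} : BigStep ψ (ψ y) σ σ' → BigStep ψ (.call y) σ σ'

/-- Semantic Hoare triple ⊨_ψ {P} c {Q}. -/
def Hoare (ψ : ProcEnv) (P : Assertion) (c : Com) (Q : Assertion) : Prop :=
  ∀ σ σ', P σ → BigStep ψ c σ σ' → Q σ'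

/-- All procedure contracts of φ are valid under ψ. -/
def ContractsValid (ψ : ProcEnv) (φ : ContractEnv) : Prop :=
  ∀ y, Hoare ψ (φ y).pre (.call y) (φ y).post

/-- Main verification-condition generator. -/
def Tc : Com → State → ContractEnv → Assertion → Prop
  | .skip, σ, _, f => ∀ σ', σ' = σ → f σ'
  | .assign i a, σ, _, f => ∀ σ', σ' = upd σ i (evalA a σ) → f σ'
  | .assignDeref i a, σ, _, f => ∀ σ', σ' = upd σ (σ i) (evalA a σ) → f σ'
  | .seq c₀ c₁, σ, φ, f => Tc c₀ σ φ (fun σ' => Tc c₁ σ' φ f)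
  | .assert P, σ, _, f => ∀ σ', σ' = σ ∧ P σ → f σ'
  | .ite b c₀ c₁, σ, φ, f =>
      (evalB b σ = true → Tc c₀ σ φ f) ∧ (¬ evalB b σ = true → Tc c₁ σ φ f)
  | .while b inv _c, σ, _φ, f =>
      inv σ → ∀ σ', inv σ' ∧ ¬ evalB b σ' = true → f σ'
  | .call y, σ, φ, f => (φ y).pre σ → ∀ σ', (φ y).post σ' → f σ'

/-- Auxiliary verification-condition generator. -/
def Ta : Com → State → ContractEnv → Prop
  | .skip, _, _ => True
  | .assign _ _, _, _ => True
  | .assignDeref _ _, _, _ => True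
  | .seq c₀ c₁, σ, φ => Ta c₀ σ φ ∧ Tc c₀ σ φ (fun σ' => Ta c₁ σ' φ)
  | .assert P, σ, _ => P σ
  | .ite b c₀ c₁, σ, φ =>
      (evalB b σ = true → Ta c₀ σ φ) ∧ (¬ evalB b σ = true → Ta c₁ σ φ)
  | .while b inv c, σ, φ =>
      inv σ ∧ (∀ σ', inv σ' ∧ evalB b σ' = true → Ta c σ' φ) ∧
        (∀ σ', inv σ' ∧ evalB b σ' = true → Tc c σ' φ inv)
  | .call y, σ, φ => (φ y).pre σ

/-- Procedure verification condition. -/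
def Tf (φ : ContractEnv) (ψ : ProcEnv) : Prop :=
  ∀ y σ, (φ y).pre σ → Ta (ψ y) σ φ ∧ Tc (ψ y) σ φ (φ y).post

/-- Relational assertions over sequences of memory states. -/
abbrev RAssertion := List State → Prop

/-- Relational VC generator; the head of the list is the last command/state (cₙ, σₙ). -/
def Tr : List Com → List State → ContractEnv → RAssertion → Prop
  | [], [], _, Q => Q []
  | c :: cs, σ :: σs, φ, Q =>
      Tc c σ φ (fun σ' => Tr cs σs φ (fun σs' => Q (σ' :: σs')))
  | _, _, _, _ => False

/-- Auxiliary relational obligations: conjunction of Ta over all commands. -/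
def Tar : List Com → List State → ContractEnv → Prop
  | [], [], _ => True
  | c :: cs, σ :: σs, φ => Ta c σ φ ∧ Tar cs σs φ
  | _, _, _ => False

/-- Pointwise execution of a sequence of commands. -/
def ExecAll (ψ : ProcEnv) : List Com → List State → List State → Prop
  | [], [], [] => True
  | c :: cs, σ :: σs, σ' :: σs' => BigStep ψ c σ σ' ∧ ExecAll ψ cs σs σs'
  | _, _, _ => False

/-!
Induction on the big-step derivation, generalising the postcondition. `Ta` supplies exactly the
side conditions `Tc` takes for granted: the asserted formulas, the loop invariants (initially and
preserved by the body), and the preconditions of calls. At a call, `Tf` provides the verification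
conditions of the body, whose derivation is a subderivation, so recursive procedures need no
separate argument.
-/

theorem BigStep.post_of_vc {ψ : ProcEnv} {φ : ContractEnv} (hTf : Tf φ ψ) {c : Com}
    {σ σ' : State} (h : BigStep ψ c σ σ') {Q : Assertion} (hTa : Ta c σ φ)
    (hTc : Tc c σ φ Q) : Q σ' := by
  induction h generalizing Q with
  | skip | assign | assignDeref => exact hTc _ rfl
  | seq _ _ ih₁ ih₂ => exact ih₂ (ih₁ hTa.1 hTa.2) (ih₁ hTa.1 hTc)
  | assert => exact hTc _ ⟨rfl, hTa⟩
  | iteTrue hb _ ih => exact ih (hTa.1 hb) (hTc.1 hb)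
  | iteFalse hb _ ih =>
    have hb' : ¬ _ = true := Bool.eq_false_iff.mp hb
    exact ih (hTa.2 hb') (hTc.2 hb')
  | whileTrue hb _ _ ihBody ihLoop =>
    obtain ⟨hinv, hTaBody, hTcBody⟩ := hTa
    have hinv' := ihBody (hTaBody _ ⟨hinv, hb⟩) (hTcBody _ ⟨hinv, hb⟩)
    -- `Tc` of a loop mentions its start state only through the invariant.
    exact ihLoop ⟨hinv', hTaBody, hTcBody⟩ fun _ => hTc hinv
  | whileFalse hb => exact hTc hTa.1 _ ⟨hTa.1, Bool.eq_false_iff.mp hb⟩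
  | @call y _ _ _ ih =>
    obtain ⟨hTaBody, hTcBody⟩ := hTf y _ hTa
    exact hTc hTa _ (ih hTaBody hTcBody)

theorem vcg_soundness (ψ : ProcEnv) (φ : ContractEnv) (c : Com) (P Q : Assertion)
    (hTf : Tf φ ψ)
    (hTa : ∀ σ, P σ → Ta c σ φ)
    (hTc : ∀ σ, P σ → Tc c σ φ Q) :
    Hoare ψ P c Q := fun σ _ hP h => h.post_of_vc hTf (hTa σ hP) (hTc σ hP)
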